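/- arXiv:1412.0221 — 2 statements merged into one kernel-verified Lean document; each statement's English description precedes it below -/
import Mathlib

section
/- Let $(L_\varepsilon)$ be a family of $k$-dimensional vector subspaces of $\mathbb{C}^d$. If the dimension of $\liminf_{\varepsilon \to 0} L_\varepsilon$ equals $k$, then $\liminf_{\varepsilon \to 0} L_\varepsilon = \limsup_{\varepsilon \to 0} L_\varepsilon$. -/
open Filter Metric

/-- `K ε = L ε ∩ closed unit ball`. -/
def subspaceBall {d : ℕ} (L : ℂ → Submodule ℂ (EuclideanSpace ℂ (Fin d))) (ε : ℂ) :
    Set (EuclideanSpace ℂ (Fin d)) :=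
  (L ε : Set (EuclideanSpace ℂ (Fin d))) ∩ Metric.closedBall 0 1

/-- Hausdorff-type lower limit of the sets `K ε` as `ε → 0`. -/
def liminfBall {d : ℕ} (L : ℂ → Submodule ℂ (EuclideanSpace ℂ (Fin d))) :
    Set (EuclideanSpace ℂ (Fin d)) :=
  {x | ∃ u : ℂ → EuclideanSpace ℂ (Fin d),
    (∀ ε, u ε ∈ subspaceBall L ε) ∧ Tendsto u (nhdsWithin (0 : ℂ) {0}ᶜ) (nhds x)}

/-- Hausdorff-type upper limit of the sets `K ε` as `ε → 0`. -/
def limsupBall {d : ℕ} (L : ℂ → Submodule ℂ (EuclideanSpace ℂ (Fin d))) :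
    Set (EuclideanSpace ℂ (Fin d)) :=
  {x | ∃ (εs : ℕ → ℂ) (xs : ℕ → EuclideanSpace ℂ (Fin d)),
    Tendsto εs atTop (nhdsWithin (0 : ℂ) {0}ᶜ) ∧
    (∀ n, xs n ∈ subspaceBall L (εs n)) ∧ Tendsto xs atTop (nhds x)}

/-- Lower limit of the family of subspaces. -/
noncomputable def liminfSubspace {d : ℕ} (L : ℂ → Submodule ℂ (EuclideanSpace ℂ (Fin d))) :
    Submodule ℂ (EuclideanSpace ℂ (Fin d)) :=
  Submodule.span ℂ (liminfBall L)

/-- Upper limit of the family of subspaces. -/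
noncomputable def limsupSubspace {d : ℕ} (L : ℂ → Submodule ℂ (EuclideanSpace ℂ (Fin d))) :
    Submodule ℂ (EuclideanSpace ℂ (Fin d)) :=
  Submodule.span ℂ (limsupBall L)

/-! Let `M` be the lower limit, of dimension `k`, and let `x` be a limit of points
`x n ∈ L (ε n)`. If `x ∉ M`, then `x` together with a basis of `M` is a linearly independent
family of `k + 1` vectors. Each basis vector is a limit of sections of `L`, and linear
independence is an open condition, so for large `n` the approximating family consists of `k + 1`
linearly independent vectors of the `k`-dimensional space `L (ε n)`. -/

open Topology

section KuratowskiLiminf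

variable {ι 𝕜 E : Type*} [Semiring 𝕜] [AddCommMonoid E] [Module 𝕜 E] [TopologicalSpace E]
  [ContinuousAdd E] [ContinuousConstSMul 𝕜 E]

def kuratowskiLiminf (l : Filter ι) (L : ι → Submodule 𝕜 E) : Submodule 𝕜 E where
  carrier := {x | ∃ u : ι → E, (∀ i, u i ∈ L i) ∧ Tendsto u l (𝓝 x)}
  zero_mem' := ⟨0, fun i => (L i).zero_mem, tendsto_const_nhds⟩
  add_mem' := by
    rintro x y ⟨u, hu, hux⟩ ⟨w, hw, hwy⟩
    exact ⟨u + w, fun i => (L i).add_mem (hu i) (hw i), hux.add hwy⟩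
  smul_mem' := by
    rintro a x ⟨u, hu, hux⟩
    exact ⟨a • u, fun i => (L i).smul_mem a (hu i), hux.const_smul a⟩

theorem kuratowskiLiminf_le_comp {κ : Type*} {l : Filter ι} {l' : Filter κ} {φ : κ → ι}
    (hφ : Tendsto φ l' l) (L : ι → Submodule 𝕜 E) :
    kuratowskiLiminf l L ≤ kuratowskiLiminf l' (L ∘ φ) := by
  rintro x ⟨u, hu, hux⟩
  exact ⟨u ∘ φ, fun i => hu (φ i), hux.comp hφ⟩

end KuratowskiLiminf

theorem mem_of_tendsto_of_le_kuratowskiLiminf {ι 𝕜 E : Type*}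
    [NontriviallyNormedField 𝕜] [CompleteSpace 𝕜]
    [NormedAddCommGroup E] [NormedSpace 𝕜 E] [FiniteDimensional 𝕜 E]
    {l : Filter ι} [l.NeBot] {L : ι → Submodule 𝕜 E} {M : Submodule 𝕜 E}
    (hM : M ≤ kuratowskiLiminf l L)
    (hdim : ∀ᶠ i in l, Module.finrank 𝕜 (L i) ≤ Module.finrank 𝕜 M)
    {x : ι → E} {y : E} (hx : ∀ᶠ i in l, x i ∈ L i) (hxy : Tendsto x l (𝓝 y)) : y ∈ M := by
  by_contra hy
  let b := Module.finBasis 𝕜 M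
  choose u hu hub using fun j => hM (b j).2
  have hindep : LinearIndependent 𝕜 (Fin.cons y (fun j => (b j : E)) : Fin _ → E) :=
    linearIndependent_finCons.2 ⟨b.linearIndependent.map' M.subtype M.ker_subtype,
      fun hspan => hy (Submodule.span_le.2 (Set.range_subset_iff.2 fun j => (b j).2) hspan)⟩
  have htendsto : Tendsto (fun i => (Fin.cons (x i) (fun j => u j i) : Fin _ → E)) l
      (𝓝 (Fin.cons y fun j => (b j : E))) :=
    tendsto_pi_nhds.2 fun j => Fin.cases (by simpa using hxy) (fun j => by simpa using hub j) j
  obtain ⟨i, hi, hxi, hdimi⟩ := ((htendsto.eventually hindep.eventually).and (hx.and hdim)).exists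
  have hspan : Submodule.span 𝕜 (Set.range (Fin.cons (x i) fun j => u j i : Fin _ → E)) ≤ L i :=
    Submodule.span_le.2 <| Set.range_subset_iff.2 fun j => Fin.cases hxi (fun j => hu j i) j
  have := (linearIndependent_iff_card_le_finrank_span.1 hi).trans (Submodule.finrank_mono hspan)
  simp only [Fintype.card_fin] at this
  omega

theorem liminfBall_subset_limsupBall {d : ℕ} (L : ℂ → Submodule ℂ (EuclideanSpace ℂ (Fin d))) :
    liminfBall L ⊆ limsupBall L := by
  rintro x ⟨u, hu, hux⟩
  obtain ⟨εs, hεs⟩ := exists_seq_tendsto (𝓝[≠] (0 : ℂ))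
  exact ⟨εs, u ∘ εs, hεs, fun n => hu (εs n), hux.comp hεs⟩

theorem liminfSubspace_le_kuratowskiLiminf {d : ℕ}
    (L : ℂ → Submodule ℂ (EuclideanSpace ℂ (Fin d))) :
    liminfSubspace L ≤ kuratowskiLiminf (𝓝[≠] 0) L := by
  refine Submodule.span_le.2 ?_
  rintro x ⟨u, hu, hux⟩
  exact ⟨u, fun ε => (hu ε).1, hux⟩

/-- If `dim (limsup L_ε) = k`, then `liminf L_ε = limsup L_ε`. -/
theorem liminf_eq_limsup_of_finrank_liminf_eq
    (d k : ℕ) (L : ℂ → Submodule ℂ (EuclideanSpace ℂ (Fin d)))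
    (hdim : ∀ ε : ℂ, Module.finrank ℂ (L ε) = k)
    (h : Module.finrank ℂ (liminfSubspace L) = k) :
    liminfSubspace L = limsupSubspace L := by
  refine le_antisymm (Submodule.span_mono (liminfBall_subset_limsupBall L)) ?_
  refine Submodule.span_le.2 ?_
  rintro x ⟨εs, xs, hεs, hxs, hxsx⟩
  refine mem_of_tendsto_of_le_kuratowskiLiminf (L := L ∘ εs)
    ((liminfSubspace_le_kuratowskiLiminf L).trans (kuratowskiLiminf_le_comp hεs L))
    (Eventually.of_forall fun _ => ((hdim _).trans h.symm).le)
    (Eventually.of_forall fun n => (hxs n).1) hxsx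
end

section
/- For $k \in \mathbb{C} \setminus \{0\}$, the ideal $\mathcal{J}_0 = \langle z_1 z_2,\ z_1^2 + k z_2^2,\ z_1^3 \rangle$ in $\mathbb{C}[z_1,z_2]$ has colength $4$: the quotient $\mathbb{C}[z_1,z_2]/\mathcal{J}_0$ is spanned by the classes of $1, z_1, z_2, z_2^2$. -/
open MvPolynomial

noncomputable section ColengthAuxSec

/-- The coefficient functional as a linear map. -/
private noncomputable def coeffL (m : Fin 2 →₀ ℕ) : MvPolynomial (Fin 2) ℂ →ₗ[ℂ] ℂ where
  toFun := coeff m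
  map_add' p q := coeff_add m p q
  map_smul' c p := coeff_smul m c p

@[simp] private lemma single_sub_single_aux (i : Fin 2) (n : ℕ) :
    (Finsupp.single i (n + 1) - Finsupp.single i 1 : Fin 2 →₀ ℕ) = Finsupp.single i n := by
  ext j
  by_cases h : i = j <;> simp [Finsupp.tsub_apply, Finsupp.single_apply, h]

@[simp] private lemma coeffL_apply (m : Fin 2 →₀ ℕ) (p : MvPolynomial (Fin 2) ℂ) :
    coeffL m p = coeff m p := rfl

/-- The linear functional package `p ↦ (p(0), coeff z₁ p, coeff z₂ p, coeff z₂² p - k coeff z₁² p)`. -/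
private noncomputable def psi (k : ℂ) : MvPolynomial (Fin 2) ℂ →ₗ[ℂ] (Fin 4 → ℂ) :=
  LinearMap.pi ![coeffL 0, coeffL (Finsupp.single 0 1), coeffL (Finsupp.single 1 1),
    coeffL (Finsupp.single 1 2) - k • coeffL (Finsupp.single 0 2)]

private lemma psi_g1 (k : ℂ) (f : MvPolynomial (Fin 2) ℂ) :
    psi k (f * (X 0 * X 1)) = 0 := by
  have h : f * (X 0 * X 1) = f * X 0 * X 1 := by ring
  funext i
  fin_cases i <;>
    simp [psi, h, coeff_mul_X', Finsupp.mem_support_iff, Finsupp.single_apply,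
      Finsupp.tsub_apply]

private lemma psi_g2 (k : ℂ) (f : MvPolynomial (Fin 2) ℂ) :
    psi k (f * ((X 0) ^ 2 + C k * (X 1) ^ 2)) = 0 := by
  have h : f * ((X 0) ^ 2 + C k * (X 1) ^ 2) = f * X 0 * X 0 + C k * (f * X 1 * X 1) := by ring
  funext i
  fin_cases i <;>
    simp [psi, h, coeff_mul_X', coeff_C_mul, Finsupp.mem_support_iff, Finsupp.single_apply,
      Finsupp.tsub_apply, show ((2:ℕ)) = 1 + 1 from rfl]

private lemma psi_g3 (k : ℂ) (f : MvPolynomial (Fin 2) ℂ) :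
    psi k (f * (X 0) ^ 3) = 0 := by
  have h : f * (X 0) ^ 3 = f * X 0 * X 0 * X 0 := by ring
  funext i
  fin_cases i <;>
    simp [psi, h, coeff_mul_X', Finsupp.mem_support_iff, Finsupp.single_apply,
      Finsupp.tsub_apply]

end ColengthAuxSec

set_option maxHeartbeats 1000000 in
set_option synthInstance.maxHeartbeats 400000 in
/-- For `k ≠ 0`, the ideal `⟨z₁z₂, z₁² + k z₂², z₁³⟩ ⊂ ℂ[z₁,z₂]` has colength 4; the
quotient is spanned by the classes of `1, z₁, z₂, z₂²`. -/
theorem colength_J0_eq_four (k : ℂ) (hk : k ≠ 0) :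
    letI J0 : Ideal (MvPolynomial (Fin 2) ℂ) :=
      Ideal.span {X 0 * X 1, (X 0) ^ 2 + C k * (X 1) ^ 2, (X 0) ^ 3}
    Module.finrank ℂ (MvPolynomial (Fin 2) ℂ ⧸ J0) = 4 ∧
    Submodule.span ℂ
      {Ideal.Quotient.mk J0 1, Ideal.Quotient.mk J0 (X 0),
        Ideal.Quotient.mk J0 (X 1), Ideal.Quotient.mk J0 ((X 1) ^ 2)} = ⊤ := by
  set J0 : Ideal (MvPolynomial (Fin 2) ℂ) :=
    Ideal.span {X 0 * X 1, (X 0) ^ 2 + C k * (X 1) ^ 2, (X 0) ^ 3} with hJ0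
  set mk := Ideal.Quotient.mk J0 with hmk
  -- generator memberships
  have hg1 : (X 0 * X 1 : MvPolynomial (Fin 2) ℂ) ∈ J0 := Ideal.subset_span (by simp)
  have hg2 : ((X 0) ^ 2 + C k * (X 1) ^ 2 : MvPolynomial (Fin 2) ℂ) ∈ J0 := Ideal.subset_span (by simp)
  have hg3 : ((X 0) ^ 3 : MvPolynomial (Fin 2) ℂ) ∈ J0 := Ideal.subset_span (by simp)
  -- smul compatibility
  have hsm : ∀ (c : ℂ) (p : MvPolynomial (Fin 2) ℂ), mk (C c * p) = c • mk p := by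
    intro c p
    rw [hmk, C_mul', ← Ideal.Quotient.mkₐ_eq_mk ℂ, map_smul]
  -- key vanishing facts in the quotient
  have h1 : mk (X 0 * X 1) = 0 := (Ideal.Quotient.eq_zero_iff_mem).2 hg1
  have h2 : mk ((X 0) ^ 2) = -(k • mk ((X 1) ^ 2)) := by
    have h0 : mk ((X 0) ^ 2 + C k * (X 1) ^ 2) = 0 := (Ideal.Quotient.eq_zero_iff_mem).2 hg2
    rw [map_add, hsm] at h0
    linear_combination h0
  have h3 : mk (X 0 * (X 1) ^ 2) = 0 := by
    refine (Ideal.Quotient.eq_zero_iff_mem).2 ?_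
    have : (X 0 * (X 1) ^ 2 : MvPolynomial (Fin 2) ℂ) = X 1 * (X 0 * X 1) := by ring
    rw [this]; exact Ideal.mul_mem_left _ _ hg1
  have h4 : mk ((X 1) ^ 3) = 0 := by
    refine (Ideal.Quotient.eq_zero_iff_mem).2 ?_
    have hmem : (C k * (X 1) ^ 3 : MvPolynomial (Fin 2) ℂ) ∈ J0 := by
      have h := Ideal.sub_mem _ (Ideal.mul_mem_left J0 (X 1) hg2)
        (Ideal.mul_mem_left J0 (X 0) hg1)
      have : (X 1 * ((X 0) ^ 2 + C k * (X 1) ^ 2) - X 0 * (X 0 * X 1) : MvPolynomial (Fin 2) ℂ)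
          = C k * (X 1) ^ 3 := by ring
      rwa [this] at h
    have := Ideal.mul_mem_left J0 (C k⁻¹) hmem
    rwa [← mul_assoc, ← C_mul, inv_mul_cancel₀ hk, C_1, one_mul] at this
  have h5 : mk ((X 0) ^ 3) = 0 := (Ideal.Quotient.eq_zero_iff_mem).2 hg3
  have h6 : mk ((X 0) ^ 2 * X 1) = 0 := by
    refine (Ideal.Quotient.eq_zero_iff_mem).2 ?_
    have : ((X 0) ^ 2 * X 1 : MvPolynomial (Fin 2) ℂ) = X 0 * (X 0 * X 1) := by ring
    rw [this]; exact Ideal.mul_mem_left _ _ hg1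
  -- the spanning set
  set S : Submodule ℂ (MvPolynomial (Fin 2) ℂ ⧸ J0) :=
    Submodule.span ℂ {mk 1, mk (X 0), mk (X 1), mk ((X 1) ^ 2)} with hS
  have hm1 : mk 1 ∈ S := Submodule.subset_span (by simp)
  have hmX0 : mk (X 0) ∈ S := Submodule.subset_span (by simp)
  have hmX1 : mk (X 1) ∈ S := Submodule.subset_span (by simp)
  have hmX12 : mk ((X 1) ^ 2) ∈ S := Submodule.subset_span (by simp)
  -- S is closed under multiplication by the images of the variables
  have hmul : ∀ x ∈ S, x * mk (X 0) ∈ S ∧ x * mk (X 1) ∈ S := by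
    intro x hx
    induction hx using Submodule.span_induction with
    | mem x hx =>
      simp only [Set.mem_insert_iff, Set.mem_singleton_iff] at hx
      rcases hx with rfl | rfl | rfl | rfl
      · constructor
        · rw [← map_mul, one_mul]; exact hmX0
        · rw [← map_mul, one_mul]; exact hmX1
      · constructor
        · rw [← map_mul, show (X 0 * X 0 : MvPolynomial (Fin 2) ℂ) = (X 0) ^ 2 by ring, h2]
          exact S.neg_mem (S.smul_mem k hmX12)
        · rw [← map_mul, h1]; exact S.zero_mem
      · constructor
        · rw [← map_mul, show (X 1 * X 0 : MvPolynomial (Fin 2) ℂ) = X 0 * X 1 by ring, h1]; exact S.zero_mem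
        · rw [← map_mul, show (X 1 * X 1 : MvPolynomial (Fin 2) ℂ) = (X 1) ^ 2 by ring]; exact hmX12
      · constructor
        · rw [← map_mul, show ((X 1) ^ 2 * X 0 : MvPolynomial (Fin 2) ℂ) = X 0 * (X 1) ^ 2 by ring, h3]
          exact S.zero_mem
        · rw [← map_mul, show ((X 1) ^ 2 * X 1 : MvPolynomial (Fin 2) ℂ) = (X 1) ^ 3 by ring, h4]; exact S.zero_mem
    | zero =>
      exact ⟨by rw [zero_mul]; exact S.zero_mem, by rw [zero_mul]; exact S.zero_mem⟩
    | add x y _ _ hx hy =>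
      exact ⟨by rw [add_mul]; exact S.add_mem hx.1 hy.1,
        by rw [add_mul]; exact S.add_mem hx.2 hy.2⟩
    | smul c x _ hx =>
      exact ⟨by rw [smul_mul_assoc]; exact S.smul_mem c hx.1,
        by rw [smul_mul_assoc]; exact S.smul_mem c hx.2⟩
  -- spanning
  have hspan : S = ⊤ := by
    rw [Submodule.eq_top_iff']
    intro x
    obtain ⟨p, rfl⟩ := Ideal.Quotient.mk_surjective x
    induction p using MvPolynomial.induction_on with
    | C a =>
      have : mk (C a) = a • mk 1 := by rw [← hsm, mul_one]
      rw [this]; exact S.smul_mem a hm1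
    | add p q hp hq => rw [map_add]; exact S.add_mem hp hq
    | mul_X p i hp =>
      rw [map_mul]
      fin_cases i
      · exact (hmul _ hp).1
      · exact (hmul _ hp).2
  -- ideal is killed by psi
  have hker : ∀ x ∈ J0, psi k x = 0 := by
    have key : ∀ x ∈ J0, ∀ f : MvPolynomial (Fin 2) ℂ, psi k (f * x) = 0 := by
      intro x hx
      induction hx using Submodule.span_induction with
      | mem x hx =>
        simp only [Set.mem_insert_iff, Set.mem_singleton_iff] at hx
        rcases hx with rfl | rfl | rfl
        · exact psi_g1 k
        · exact psi_g2 k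
        · exact psi_g3 k
      | zero => intro f; rw [mul_zero, map_zero]
      | add x y _ _ hx hy => intro f; rw [mul_add, map_add, hx f, hy f, add_zero]
      | smul c x _ hx =>
        intro f
        rw [smul_eq_mul, ← mul_assoc]
        exact hx (f * c)
    intro x hx
    have := key x hx 1
    rwa [one_mul] at this
  -- linear independence of the four classes
  set v : Fin 4 → (MvPolynomial (Fin 2) ℂ ⧸ J0) := ![mk 1, mk (X 0), mk (X 1), mk ((X 1) ^ 2)] with hv
  have hindep : LinearIndependent ℂ v := by
    rw [Fintype.linearIndependent_iff]
    intro g hg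
    have hgg : mk (C (g 0) * 1 + C (g 1) * X 0 + C (g 2) * X 1 + C (g 3) * (X 1) ^ 2) = 0 := by
      rw [map_add, map_add, map_add, hsm, hsm, hsm, hsm]
      rw [Fin.sum_univ_four] at hg
      simpa [hv] using hg
    have hp : (C (g 0) * 1 + C (g 1) * X 0 + C (g 2) * X 1 + C (g 3) * (X 1) ^ 2 : MvPolynomial (Fin 2) ℂ) ∈ J0 :=
      (Ideal.Quotient.eq_zero_iff_mem).1 hgg
    have hz := hker _ hp
    have e0 := congrFun hz 0
    have e1 := congrFun hz 1
    have e2 := congrFun hz 2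
    have e3 := congrFun hz 3
    simp [psi, coeff_add, coeff_C, coeff_C_mul, coeff_X', coeff_X_pow, coeff_one,
      Finsupp.single_eq_zero, Finsupp.single_eq_single_iff, eq_comm] at e0 e1 e2 e3
    intro i
    fin_cases i
    · exact e0.symm
    · exact e1.symm
    · exact e2.symm
    · exact e3.symm
  have hvrange : Set.range v = {mk 1, mk (X 0), mk (X 1), mk ((X 1) ^ 2)} := by
    rw [hv]
    ext x
    simp only [Set.mem_range, Set.mem_insert_iff, Set.mem_singleton_iff]
    constructor
    · rintro ⟨i, rfl⟩
      fin_cases i <;> simp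
    · rintro (rfl | rfl | rfl | rfl)
      exacts [⟨0, rfl⟩, ⟨1, rfl⟩, ⟨2, rfl⟩, ⟨3, rfl⟩]
  have hvtop : Submodule.span ℂ (Set.range v) = ⊤ := by rw [hvrange]; exact hspan
  haveI hfin : Module.Finite ℂ (MvPolynomial (Fin 2) ℂ ⧸ J0) := by
    rw [Module.finite_def, ← hvtop]
    exact Submodule.fg_span (Set.finite_range v)
  have hle : Module.finrank ℂ (MvPolynomial (Fin 2) ℂ ⧸ J0) ≤ 4 := by
    simpa using finrank_le_of_span_eq_top hvtop
  have hge : 4 ≤ Module.finrank ℂ (MvPolynomial (Fin 2) ℂ ⧸ J0) := by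
    simpa using hindep.fintype_card_le_finrank
  exact ⟨le_antisymm hle hge, hspan⟩
end
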